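/- Let (X,{f_i}_{i∈I}) be an l_θP-space and let Y be a subset of X that is closed, open and semimodal. Then X\Y is semimodal. -/
import Mathlib


/-- The axioms of an `l_θP`-space except the density axiom (lP6):
`X` is assumed to be a Priestley space (via `[CompactSpace X]` and
`[PriestleySpace X]`), each `f i` is continuous, `x ≤ y` implies `f i x = f i y`,
`i ≤ j` implies `f i x ≤ f j x`, and `f i ∘ f j = f i`. -/
structure IsLPSpaceAux {I X : Type*} [LinearOrder I] [PartialOrder X] [TopologicalSpace X]
    (f : I → X → X) : Prop where
  continuous : ∀ i, Continuous (f i)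
  eq_of_le : ∀ (i : I) ⦃x y : X⦄, x ≤ y → f i x = f i y
  mono : ∀ ⦃i j : I⦄, i ≤ j → ∀ x, f i x ≤ f j x
  comp : ∀ i j x, f i (f j x) = f i x

/-- An `l_θP`-space: the above axioms together with density of `⋃ i, f i (X)`. -/
structure IsLPSpace {I X : Type*} [LinearOrder I] [PartialOrder X] [TopologicalSpace X]
    (f : I → X → X) extends IsLPSpaceAux f : Prop where
  dense : Dense (⋃ i, Set.range (f i))

/-- `Y` is semimodal if `f i '' Y ⊆ Y` for all `i`. -/
def Semimodal {I X : Type*} (f : I → X → X) (Y : Set X) : Prop := ∀ i, f i '' Y ⊆ Y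

/-- `Y` is modal if `f i ⁻¹' Y = Y` for all `i`. -/
def Modal {I X : Type*} (f : I → X → X) (Y : Set X) : Prop := ∀ i, f i ⁻¹' Y = Y

/-- `Y` is a θ-subset if `⋃ i, f i '' Y ⊆ Y ⊆ closure (⋃ i, f i '' Y)`. -/
def ThetaSubset {I X : Type*} [TopologicalSpace X] (f : I → X → X) (Y : Set X) : Prop :=
  (⋃ i, f i '' Y) ⊆ Y ∧ Y ⊆ closure (⋃ i, f i '' Y)


/-- in an l_θP-space, the complement of a closed, open and semimodal
subset is semimodal. -/
theorem stmt11 {I X : Type*} [LinearOrder I] [PartialOrder X] [TopologicalSpace X]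
    [CompactSpace X] [PriestleySpace X] (f : I → X → X) (hf : IsLPSpace f)
    (Y : Set X) (hYc : IsClosed Y) (hYo : IsOpen Y) (hY : Semimodal f Y) :
    Semimodal f Yᶜ := by
  intro i y hy
  rcases hy with ⟨x, hx, rfl⟩
  by_contra hmem
  rw [Set.mem_compl_iff, not_not] at hmem
  -- U is open and nonempty
  have hU : IsOpen (f i ⁻¹' Y ∩ Yᶜ) :=
    (hYo.preimage (hf.continuous i)).inter hYc.isOpen_compl
  have hUne : (f i ⁻¹' Y ∩ Yᶜ).Nonempty := ⟨x, hmem, hx⟩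
  obtain ⟨z, hz, hz'⟩ := hf.dense.exists_mem_open hU hUne
  rcases Set.mem_iUnion.mp hz with ⟨j, w, rfl⟩
  have h1 : f i (f j w) ∈ Y := hz'.1
  have h2 : f j (f i (f j w)) ∈ Y := hY j ⟨_, h1, rfl⟩
  have h3 : f j (f i (f j w)) = f j w := by
    rw [hf.comp, hf.comp]
  rw [h3] at h2
  exact hz'.2 h2
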